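/- Let G be a finite graph with minimal right-resolving factor M = M(G) and state map Σ_G. Define I₁ ≈₀ I₂ (for Σ_G(I₁) = Σ_G(I₂)) iff there exist equal-length paths γ = γ₁⋯γ_n, δ = δ₁⋯δ_n in G with s(γ₁) = s(δ₁), t(γ_n) = I₁, t(δ_n) = I₂, and Σ_G(t(γ_i)) = Σ_G(t(δ_i)) for all i, and let ≈ be the transitive closure of ≈₀. Then ≈ is a congruence with respect to any right-resolver Φ: G → M, and the quotient graph G/≈ is bunchy. -/

import Mathlib

/-- A finite directed multigraph. -/
structure FinGraph where
  V : Type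
  E : Type
  [fintV : Fintype V]
  [fintE : Fintype E]
  [decV : DecidableEq V]
  [decE : DecidableEq E]
  src : E → V
  tgt : E → V

attribute [instance] FinGraph.fintV FinGraph.fintE FinGraph.decV FinGraph.decE

/-- A graph homomorphism. -/
structure GHom (G H : FinGraph) where
  eMap : G.E → H.E
  vMap : G.V → H.V
  src_eq : ∀ e, H.src (eMap e) = vMap (G.src e)
  tgt_eq : ∀ e, H.tgt (eMap e) = vMap (G.tgt e)

def GHom.comp {G K H : FinGraph} (Δ : GHom K H) (Ψ : GHom G K) : GHom G H where
  eMap := Δ.eMap ∘ Ψ.eMap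
  vMap := Δ.vMap ∘ Ψ.vMap
  src_eq := fun e => by
    simp only [Function.comp_apply, Δ.src_eq, Ψ.src_eq]
  tgt_eq := fun e => by
    simp only [Function.comp_apply, Δ.tgt_eq, Ψ.tgt_eq]

/-- The restriction of a homomorphism to the outgoing edges of a state. -/
def outMap {G H : FinGraph} (Φ : GHom G H) (I : G.V) :
    {e : G.E // G.src e = I} → {f : H.E // H.src f = Φ.vMap I} :=
  fun e => ⟨Φ.eMap e.1, (Φ.src_eq e.1).trans (congrArg Φ.vMap e.2)⟩

/-- A right-resolver: a surjective homomorphism restricting to a bijection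
on the outgoing edges of each state. -/
def IsRR {G H : FinGraph} (Φ : GHom G H) : Prop :=
  Function.Surjective Φ.vMap ∧ ∀ I : G.V, Function.Bijective (outMap Φ I)

/-- `IsPathFrom H I u`: the edge list `u` is a path in `H` starting at `I`. -/
def IsPathFrom (H : FinGraph) : H.V → List H.E → Prop
  | _, [] => True
  | I, e :: u => H.src e = I ∧ IsPathFrom H (H.tgt e) u

/-- The terminal state of a path starting at `I`. -/
def pathEnd (H : FinGraph) (I : H.V) (u : List H.E) : H.V :=
  u.foldl (fun _ e => H.tgt e) I

/-- One-step transition: `I · a` is the target of the unique edge at `I`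
lifting `a` (when `Φ` is right-resolving and `a` starts at the image of `I`). -/
noncomputable def step {G H : FinGraph} (Φ : GHom G H) (I : G.V) (a : H.E) : G.V :=
  if h : ∃ e : G.E, G.src e = I ∧ Φ.eMap e = a then G.tgt h.choose else I

/-- Transition along a word: `I · u`. -/
noncomputable def transPath {G H : FinGraph} (Φ : GHom G H) (I : G.V) (u : List H.E) : G.V :=
  u.foldl (step Φ) I

/-- The stability relation of a right-resolver. -/
def Stable {G H : FinGraph} (Φ : GHom G H) (I₁ I₂ : G.V) : Prop :=
  Φ.vMap I₁ = Φ.vMap I₂ ∧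
  ∀ u : List H.E, IsPathFrom H (Φ.vMap I₁) u →
    ∃ v : List H.E, IsPathFrom H (pathEnd H (Φ.vMap I₁) u) v ∧
      transPath Φ I₁ (u ++ v) = transPath Φ I₂ (u ++ v)

/-- A right-resolver is synchronizing if each fiber of its state map is a
single stability class. -/
def Synchronizing {G H : FinGraph} (Φ : GHom G H) : Prop :=
  ∀ I₁ I₂ : G.V, Φ.vMap I₁ = Φ.vMap I₂ → Stable Φ I₁ I₂

/-- The fiber of the state map over a state of the codomain. -/
def fiber {G H : FinGraph} (Φ : GHom G H) (I : H.V) : Set G.V := {J | Φ.vMap J = I}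

/-- The image `U · u` of a set of states under transition along a word. -/
noncomputable def setTrans {G H : FinGraph} (Φ : GHom G H) (U : Set G.V)
    (u : List H.E) : Set G.V :=
  (fun J => transPath Φ J u) '' U

/-- A minimal image of a right-resolver. -/
def IsMinImage {G H : FinGraph} (Φ : GHom G H) (U : Set G.V) : Prop :=
  ∃ (I : H.V) (u : List H.E), IsPathFrom H I u ∧ U = setTrans Φ (fiber Φ I) u ∧
    ∀ v : List H.E, IsPathFrom H (pathEnd H I u) v →
      (setTrans Φ U v).ncard = U.ncard

/-- Strong connectedness: a directed path between every ordered pair of states. -/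
def StronglyConnected (G : FinGraph) : Prop :=
  ∀ I J : G.V, ∃ u : List G.E, IsPathFrom G I u ∧ pathEnd G I u = J

def MinimalRR (M : FinGraph) : Prop :=
  ∀ (H : FinGraph) (Φ : GHom M H), IsRR Φ →
    Function.Bijective Φ.eMap ∧ Function.Bijective Φ.vMap

/-- The relation ≈₀: two states are related if they are the ends of two
equal-length paths with a common source whose successive states have the same
images under σ (the state map onto the minimal factor). -/
def approx0 {G M : FinGraph} (σ : G.V → M.V) (I₁ I₂ : G.V) : Prop :=
  ∃ (I₀ : G.V) (γ δ : List G.E), γ.length = δ.length ∧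
    IsPathFrom G I₀ γ ∧ IsPathFrom G I₀ δ ∧
    pathEnd G I₀ γ = I₁ ∧ pathEnd G I₀ δ = I₂ ∧
    ∀ i ≤ γ.length, σ (pathEnd G I₀ (γ.take i)) = σ (pathEnd G I₀ (δ.take i))

/-! Extending the two paths witnessing `I₁ ≈₀ I₂` by edges out of `I₁` and `I₂` with
`Σ`-equal targets witnesses `≈₀` on the targets. Along a right-resolver the edges read
off the same label from two states of one fiber are such a pair, which makes `≈` a
congruence; and an edge out of the middle state of a chain `I₁ ≈ J ≈₀ I₂` can always be
chosen with the label of a given edge out of `I₂`, which makes `G/≈` bunchy. -/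

section Paths

variable {H : FinGraph}

lemma pathEnd_append (I : H.V) (u v : List H.E) :
    pathEnd H I (u ++ v) = pathEnd H (pathEnd H I u) v := by
  simp [pathEnd, List.foldl_append]

lemma IsPathFrom.append {I : H.V} {u v : List H.E} (hu : IsPathFrom H I u)
    (hv : IsPathFrom H (pathEnd H I u) v) : IsPathFrom H I (u ++ v) := by
  induction u generalizing I with
  | nil => exact hv
  | cons a u ih => exact ⟨hu.1, ih hu.2 hv⟩

end Paths

section RightResolver

variable {G M : FinGraph} {Φ : GHom G M}

lemma exists_lift_of_isRR (hΦ : IsRR Φ) {I : G.V} {a : M.E} (ha : M.src a = Φ.vMap I) :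
    ∃ e : G.E, G.src e = I ∧ Φ.eMap e = a := by
  obtain ⟨e, he⟩ := (hΦ.2 I).2 ⟨a, ha⟩
  exact ⟨e.1, e.2, congrArg Subtype.val he⟩

lemma exists_lift_step (hΦ : IsRR Φ) {I : G.V} {a : M.E} (ha : M.src a = Φ.vMap I) :
    ∃ e : G.E, G.src e = I ∧ Φ.eMap e = a ∧ step Φ I a = G.tgt e := by
  have h := exists_lift_of_isRR hΦ ha
  exact ⟨h.choose, h.choose_spec.1, h.choose_spec.2, dif_pos h⟩

lemma step_of_src_ne {I : G.V} {a : M.E} (ha : M.src a ≠ Φ.vMap I) : step Φ I a = I := by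
  refine dif_neg ?_
  rintro ⟨e, rfl, rfl⟩
  exact ha (Φ.src_eq e)

end RightResolver

namespace approx0

variable {G M : FinGraph}

lemma map_eq {σ : G.V → M.V} {I₁ I₂ : G.V} (h : approx0 σ I₁ I₂) : σ I₁ = σ I₂ := by
  obtain ⟨I₀, γ, δ, hlen, -, -, rfl, rfl, hσ⟩ := h
  have := hσ γ.length le_rfl
  rwa [List.take_length, hlen, List.take_length] at this

lemma transGen_map_eq {σ : G.V → M.V} {I₁ I₂ : G.V}
    (h : Relation.TransGen (approx0 σ) I₁ I₂) : σ I₁ = σ I₂ := by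
  induction h with
  | single h => exact h.map_eq
  | tail _ h ih => exact ih.trans h.map_eq

lemma tgt {σ : G.V → M.V} {I₁ I₂ : G.V} (h : approx0 σ I₁ I₂) {e₁ e₂ : G.E}
    (h₁ : G.src e₁ = I₁) (h₂ : G.src e₂ = I₂) (hσ : σ (G.tgt e₁) = σ (G.tgt e₂)) :
    approx0 σ (G.tgt e₁) (G.tgt e₂) := by
  obtain ⟨I₀, γ, δ, hlen, hγ, hδ, rfl, rfl, hσγδ⟩ := h
  refine ⟨I₀, γ ++ [e₁], δ ++ [e₂], by simp [hlen], hγ.append ⟨h₁, trivial⟩,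
    hδ.append ⟨h₂, trivial⟩, pathEnd_append .., pathEnd_append .., fun i hi => ?_⟩
  rcases Nat.le_succ_iff.mp (by simpa using hi) with hi | rfl
  · rw [List.take_append_of_le_length hi, List.take_append_of_le_length (hlen ▸ hi)]
    exact hσγδ i hi
  · rw [List.take_of_length_le (by simp), List.take_of_length_le (by simp [hlen]),
      pathEnd_append, pathEnd_append]
    exact hσ

/-- Off the common fiber of `I₁` and `I₂`, `step` is the identity on both. -/
lemma step {Φ : GHom G M} (hΦ : IsRR Φ) {I₁ I₂ : G.V} (h : approx0 Φ.vMap I₁ I₂)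
    (a : M.E) : approx0 Φ.vMap (_root_.step Φ I₁ a) (_root_.step Φ I₂ a) := by
  by_cases ha : M.src a = Φ.vMap I₁
  · obtain ⟨e₁, h₁, he₁, hstep₁⟩ := exists_lift_step hΦ ha
    obtain ⟨e₂, h₂, he₂, hstep₂⟩ := exists_lift_step hΦ (ha.trans h.map_eq)
    rw [hstep₁, hstep₂]
    refine h.tgt h₁ h₂ ?_
    rw [← Φ.tgt_eq, ← Φ.tgt_eq, he₁, he₂]
  · rwa [step_of_src_ne ha, step_of_src_ne (h.map_eq ▸ ha)]

end approx0

section Congruence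

variable {G M : FinGraph} {Φ : GHom G M}

lemma transGen_approx0_transPath (hΦ : IsRR Φ) (u : List M.E) {I₁ I₂ : G.V}
    (h : Relation.TransGen (approx0 Φ.vMap) I₁ I₂) :
    Relation.TransGen (approx0 Φ.vMap) (transPath Φ I₁ u) (transPath Φ I₂ u) := by
  induction u generalizing I₁ I₂ with
  | nil => exact h
  | cons a u ih => exact ih (Relation.TransGen.lift (step Φ · a) (fun _ _ h => h.step hΦ a) _ _ h)

lemma transGen_approx0_tgt (hΦ : IsRR Φ) {I₁ I₂ : G.V}
    (h : Relation.TransGen (approx0 Φ.vMap) I₁ I₂) {e₁ e₂ : G.E}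
    (h₁ : G.src e₁ = I₁) (h₂ : G.src e₂ = I₂) (hσ : Φ.vMap (G.tgt e₁) = Φ.vMap (G.tgt e₂)) :
    Relation.TransGen (approx0 Φ.vMap) (G.tgt e₁) (G.tgt e₂) := by
  induction h generalizing e₂ with
  | single h => exact .single (h.tgt h₁ h₂ hσ)
  | @tail J _ _ hJ ih =>
    obtain ⟨f, hf, hfe⟩ := exists_lift_of_isRR hΦ
      (show M.src (Φ.eMap e₂) = Φ.vMap J by rw [Φ.src_eq, h₂, hJ.map_eq])
    have hft : Φ.vMap (G.tgt f) = Φ.vMap (G.tgt e₂) := by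
      rw [← Φ.tgt_eq, ← Φ.tgt_eq, hfe]
    exact (ih hf (hσ.trans hft.symm)).tail (hJ.tgt hf h₂ hft)

end Congruence

theorem approx_congruence_and_quotient_bunchy_general {G M : FinGraph}
    (Φ : GHom G M) (hΦ : IsRR Φ) :
    (∀ I₁ I₂ : G.V, Relation.TransGen (approx0 Φ.vMap) I₁ I₂ →
      Φ.vMap I₁ = Φ.vMap I₂ ∧
      ∀ u : List M.E, IsPathFrom M (Φ.vMap I₁) u →
        Relation.TransGen (approx0 Φ.vMap) (transPath Φ I₁ u) (transPath Φ I₂ u)) ∧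
    (∀ I₁ I₂ : G.V, Relation.TransGen (approx0 Φ.vMap) I₁ I₂ →
      ∀ e₁ e₂ : G.E, G.src e₁ = I₁ → G.src e₂ = I₂ →
        Φ.vMap (G.tgt e₁) = Φ.vMap (G.tgt e₂) →
        Relation.TransGen (approx0 Φ.vMap) (G.tgt e₁) (G.tgt e₂)) :=
  ⟨fun _ _ h => ⟨approx0.transGen_map_eq h, fun u _ => transGen_approx0_transPath hΦ u h⟩,
    fun _ _ h _ _ h₁ h₂ hσ => transGen_approx0_tgt hΦ h h₁ h₂ hσ⟩

/-- the transitive closure ≈ of ≈₀ is a congruence with respect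
to any right-resolver Φ : G → M(G) (it refines the fibers and is preserved by
transitions), and the quotient graph G/≈ is bunchy (stated concretely: two
≈-related states' outgoing edges with the same Σ-image of targets have
≈-related targets). -/
theorem approx_congruence_and_quotient_bunchy {G M : FinGraph}
    (Φ : GHom G M) (hΦ : IsRR Φ) (hM : MinimalRR M) :
    (∀ I₁ I₂ : G.V, Relation.TransGen (approx0 Φ.vMap) I₁ I₂ →
      Φ.vMap I₁ = Φ.vMap I₂ ∧
      ∀ u : List M.E, IsPathFrom M (Φ.vMap I₁) u →
        Relation.TransGen (approx0 Φ.vMap) (transPath Φ I₁ u) (transPath Φ I₂ u)) ∧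
    (∀ I₁ I₂ : G.V, Relation.TransGen (approx0 Φ.vMap) I₁ I₂ →
      ∀ e₁ e₂ : G.E, G.src e₁ = I₁ → G.src e₂ = I₂ →
        Φ.vMap (G.tgt e₁) = Φ.vMap (G.tgt e₂) →
        Relation.TransGen (approx0 Φ.vMap) (G.tgt e₁) (G.tgt e₂)) :=
  approx_congruence_and_quotient_bunchy_general Φ hΦ
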